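/- Under the action of G' on ℝ³ by matrix–vector multiplication, the orbit of S_1 = (0,0,1) is exactly the two-point set {S_1, S_6} where S_6 = (0,0,−1), and the stabilizer {σ ∈ G' : σ·S_1 = S_1} has exactly 8 elements. (By the Orbit–Stabiliser Theorem this gives |G'| = 2·8 = 16.) -/

import Mathlib

open Matrix

/-- The matrix `σ'₂` with rows `(1/√2, 1/√2, 0), (−1/√2, 1/√2, 0), (0, 0, −1)`. -/
noncomputable def sigma2' : Matrix (Fin 3) (Fin 3) ℝ :=
  !![1 / Real.sqrt 2, 1 / Real.sqrt 2, 0;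
     -(1 / Real.sqrt 2), 1 / Real.sqrt 2, 0;
     0, 0, -1]

/-- The matrix `σ' = diag(1, −1, 1)`. -/
def sigma' : Matrix (Fin 3) (Fin 3) ℝ := !![1, 0, 0; 0, -1, 0; 0, 0, 1]

/-- `G'`: the subgroup of `GL(3,ℝ)` generated by `σ'₂` and `σ'`. -/
noncomputable def G' : Subgroup (GL (Fin 3) ℝ) :=
  Subgroup.closure {g | (↑g : Matrix (Fin 3) (Fin 3) ℝ) = sigma2' ∨
    (↑g : Matrix (Fin 3) (Fin 3) ℝ) = sigma'}

/-!
`G'` is dihedral of order 16: `a = σ'₂` has order 8, `b = σ'` is an involution and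
`b a b = a⁻¹`, so every element is `aⁱ` or `aⁱ b`. Since `a e₃ = -e₃` and `b e₃ = e₃`, such an
element sends `e₃` to `(-1)ⁱ e₃`; this gives the orbit, and shows that the stabilizer of `e₃`
consists of the products `x y` with `x ∈ ⟨a²⟩` and `y ∈ ⟨b⟩`. These two cyclic groups have
orders 4 and 2 and meet trivially (`det a² = 1`, `det b = -1`), so there are exactly 8 such
products.
-/

section Dihedral

variable {G : Type*} [Group G] {a b : G}

theorem mul_zpow_eq_zpow_neg_mul (hb : b * b = 1) (hab : b * a * b = a⁻¹) (i : ℤ) :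
    b * a ^ i = a ^ (-i) * b := by
  have hconj := conj_zpow (a := b) (b := a) (i := i)
  rw [inv_eq_of_mul_eq_one_right hb, hab, _root_.inv_zpow'] at hconj
  rw [hconj, mul_assoc, hb, mul_one]

theorem exists_zpow_of_mem_closure_pair (hb : b * b = 1) (hab : b * a * b = a⁻¹) {g : G}
    (hg : g ∈ Subgroup.closure {a, b}) : ∃ i : ℤ, g = a ^ i ∨ g = a ^ i * b := by
  have mul_left_b : ∀ y : G, (∃ i : ℤ, y = a ^ i ∨ y = a ^ i * b) →
      ∃ i : ℤ, b * y = a ^ i ∨ b * y = a ^ i * b := by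
    rintro y ⟨i, rfl | rfl⟩
    · exact ⟨-i, Or.inr (mul_zpow_eq_zpow_neg_mul hb hab i)⟩
    · exact ⟨-i, Or.inl (by rw [← mul_assoc, mul_zpow_eq_zpow_neg_mul hb hab, mul_assoc, hb,
        mul_one])⟩
  induction hg using Subgroup.closure_induction_left with
  | one => exact ⟨0, Or.inl (zpow_zero a).symm⟩
  | mul_left x hx y _ ih =>
    rcases hx with rfl | rfl
    · obtain ⟨i, rfl | rfl⟩ := ih
      · exact ⟨1 + i, Or.inl (by group)⟩
      · exact ⟨1 + i, Or.inr (by group)⟩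
    · exact mul_left_b y ih
  | inv_mul_cancel x hx y _ ih =>
    rcases hx with rfl | rfl
    · obtain ⟨i, rfl | rfl⟩ := ih
      · exact ⟨-1 + i, Or.inl (by group)⟩
      · exact ⟨-1 + i, Or.inr (by group)⟩
    · rw [inv_eq_of_mul_eq_one_right hb]
      exact mul_left_b y ih

end Dihedral

theorem Int.even_of_neg_one_zpow_eq_one {K : Type*} [DivisionRing K] [CharZero K] {k : ℤ}
    (h : (-1 : K) ^ k = 1) : Even k := by
  by_contra hk
  rw [Int.not_even_iff_odd] at hk
  rw [hk.neg_one_zpow] at h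
  norm_num at h

theorem Matrix.GeneralLinearGroup.zpow_mulVec_of_mulVec_eq_smul {n K : Type*} [Fintype n]
    [DecidableEq n] [Field K] {g : GL n K} {v : n → K} {t : K}
    (h : (g : Matrix n n K) *ᵥ v = t • v) (i : ℤ) :
    ((g ^ i : GL n K) : Matrix n n K) *ᵥ v = t ^ i • v := by
  have hv : v = t • ((g⁻¹ : GL n K) : Matrix n n K) *ᵥ v := by
    rw [← mulVec_smul, ← h, mulVec_mulVec, ← Units.val_mul, inv_mul_cancel, Units.val_one,
      one_mulVec]
  rcases eq_or_ne t 0 with rfl | ht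
  · rw [zero_smul] at hv
    simp [hv]
  have hinv : ((g⁻¹ : GL n K) : Matrix n n K) *ᵥ v = t⁻¹ • v := by
    conv_rhs => rw [hv]
    exact (inv_smul_smul₀ ht _).symm
  induction i using Int.induction_on with
  | zero => simp
  | succ i ih =>
    rw [_root_.zpow_add_one, Units.val_mul, ← mulVec_mulVec, h, mulVec_smul, ih, smul_smul,
      zpow_add_one₀ ht, mul_comm]
  | pred i ih =>
    rw [_root_.zpow_sub_one, Units.val_mul, ← mulVec_mulVec, hinv, mulVec_smul, ih, smul_smul,
      zpow_sub_one₀ ht, mul_comm]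

local notation "e₃" => (![0, 0, 1] : Fin 3 → ℝ)

def quarterTurn : Matrix (Fin 3) (Fin 3) ℝ := !![0, 1, 0; -1, 0, 0; 0, 0, 1]

theorem orderOf_quarterTurn : orderOf quarterTurn = 4 := by
  have hsq : quarterTurn ^ 2 = !![-1, 0, 0; 0, -1, 0; 0, 0, 1] := by
    simp [sq, quarterTurn]
  apply orderOf_eq_prime_pow (p := 2) (n := 1)
  · rw [pow_one, hsq, one_fin_three]
    norm_num
  · rw [pow_succ, pow_one, pow_mul, hsq, one_fin_three]
    simp [sq]

theorem inv_sqrt_two_mul_self : (√2)⁻¹ * (√2)⁻¹ = 2⁻¹ := by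
  rw [← mul_inv, Real.mul_self_sqrt zero_le_two]

theorem sigma2'_mul_self : sigma2' * sigma2' = quarterTurn := by
  norm_num [sigma2', quarterTurn, mul_fin_three, inv_sqrt_two_mul_self]

theorem det_sigma2' : sigma2'.det = -1 := by
  simp [sigma2', det_fin_three, inv_sqrt_two_mul_self]
  norm_num

theorem det_sigma' : sigma'.det = -1 := by
  simp [sigma', det_fin_three]

theorem sigma'_mul_self : sigma' * sigma' = 1 := by
  simp [sigma', one_fin_three]

theorem sigma'_mul_sigma2'_mul_self : sigma' * sigma2' * sigma' * sigma2' = 1 := by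
  rw [one_fin_three]
  norm_num [sigma', sigma2', inv_sqrt_two_mul_self]

theorem sigma2'_mulVec_e₃ : sigma2' *ᵥ e₃ = (-1 : ℝ) • e₃ := by
  ext i
  fin_cases i <;> simp [sigma2', mulVec]

theorem sigma'_mulVec_e₃ : sigma' *ᵥ e₃ = e₃ := by
  ext i
  fin_cases i <;> simp [sigma', mulVec]

noncomputable def sigma2'GL : GL (Fin 3) ℝ :=
  GeneralLinearGroup.mkOfDetNeZero sigma2' (by norm_num [det_sigma2'])

noncomputable def sigma'GL : GL (Fin 3) ℝ :=
  GeneralLinearGroup.mkOfDetNeZero sigma' (by norm_num [det_sigma'])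

theorem G'_eq_closure : G' = Subgroup.closure {sigma2'GL, sigma'GL} := by
  unfold G'
  congr 1
  ext g
  simp only [Set.mem_insert_iff, Set.mem_singleton_iff, Units.ext_iff]
  rfl

theorem sigma'GL_mul_self : sigma'GL * sigma'GL = 1 :=
  Units.ext sigma'_mul_self

theorem sigma'GL_mul_sigma2'GL_mul_sigma'GL : sigma'GL * sigma2'GL * sigma'GL = sigma2'GL⁻¹ :=
  eq_inv_of_mul_eq_one_left (Units.ext sigma'_mul_sigma2'_mul_self)

theorem orderOf_sigma2'GL_sq : orderOf (sigma2'GL ^ 2) = 4 := by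
  rw [← orderOf_units, Units.val_pow_eq_pow_val, sq]
  exact sigma2'_mul_self ▸ orderOf_quarterTurn

theorem det_sigma2'GL : (GeneralLinearGroup.det sigma2'GL : ℝ) = -1 := det_sigma2'

theorem det_sigma'GL : (GeneralLinearGroup.det sigma'GL : ℝ) = -1 := det_sigma'

theorem orderOf_sigma'GL : orderOf sigma'GL = 2 := by
  refine orderOf_eq_prime (by rw [sq, sigma'GL_mul_self]) fun h ↦ ?_
  have hdet := congrArg (fun g ↦ (GeneralLinearGroup.det g : ℝ)) h
  simp only [det_sigma'GL, map_one, Units.val_one] at hdet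
  norm_num at hdet

theorem disjoint_zpowers_sigma2'GL_sq_sigma'GL :
    Disjoint (Subgroup.zpowers (sigma2'GL ^ 2)) (Subgroup.zpowers sigma'GL) := by
  rw [Subgroup.disjoint_def]
  rintro _ ⟨m, rfl⟩ ⟨k, hk⟩
  have hdet := congrArg (fun g ↦ (GeneralLinearGroup.det g : ℝ)) hk
  simp only [map_zpow, map_pow, Units.val_zpow_eq_zpow_val, Units.val_pow_eq_pow_val,
    det_sigma2'GL, det_sigma'GL] at hdet
  norm_num at hdet
  rw [← hk, ← orderOf_dvd_iff_zpow_eq_one, orderOf_sigma'GL]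
  exact even_iff_two_dvd.1 (Int.even_of_neg_one_zpow_eq_one hdet)

theorem sigma2'GL_mem_G' : sigma2'GL ∈ G' :=
  G'_eq_closure ▸ Subgroup.subset_closure (Set.mem_insert _ _)

theorem sigma'GL_mem_G' : sigma'GL ∈ G' :=
  G'_eq_closure ▸ Subgroup.subset_closure (Set.mem_insert_of_mem _ rfl)

theorem exists_zpow_of_mem_G' {g : GL (Fin 3) ℝ} (hg : g ∈ G') :
    ∃ i : ℤ, (g = sigma2'GL ^ i ∨ g = sigma2'GL ^ i * sigma'GL) ∧
      (g : Matrix (Fin 3) (Fin 3) ℝ) *ᵥ e₃ = (-1 : ℝ) ^ i • e₃ := by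
  rw [G'_eq_closure] at hg
  obtain ⟨i, hgi⟩ := exists_zpow_of_mem_closure_pair sigma'GL_mul_self
    sigma'GL_mul_sigma2'GL_mul_sigma'GL hg
  have hpow :=
    GeneralLinearGroup.zpow_mulVec_of_mulVec_eq_smul (g := sigma2'GL) sigma2'_mulVec_e₃ i
  refine ⟨i, hgi, ?_⟩
  rcases hgi with rfl | rfl
  · exact hpow
  · rw [Units.val_mul, ← mulVec_mulVec]
    exact (congrArg _ sigma'_mulVec_e₃).trans hpow

theorem orbit_e₃ :
    {v : Fin 3 → ℝ | ∃ g ∈ G', (g : Matrix (Fin 3) (Fin 3) ℝ) *ᵥ e₃ = v} = {e₃, ![0, 0, -1]} := by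
  have hneg : (-1 : ℝ) • e₃ = ![0, 0, -1] := by simp
  ext v
  constructor
  · rintro ⟨g, hg, rfl⟩
    obtain ⟨i, -, hgv⟩ := exists_zpow_of_mem_G' hg
    rcases Int.even_or_odd i with hi | hi
    · exact Or.inl (hgv.trans (by rw [hi.neg_one_zpow, one_smul]))
    · exact Or.inr (hgv.trans (by rw [hi.neg_one_zpow, hneg]))
  · rintro (rfl | rfl)
    · exact ⟨1, one_mem _, one_mulVec _⟩
    · exact ⟨sigma2'GL, sigma2'GL_mem_G', sigma2'_mulVec_e₃.trans hneg⟩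

theorem mulVec_e₃_eq_self_iff {g : GL (Fin 3) ℝ} (hg : g ∈ G') :
    (g : Matrix (Fin 3) (Fin 3) ℝ) *ᵥ e₃ = e₃ ↔
      ∃ x ∈ Subgroup.zpowers (sigma2'GL ^ 2), ∃ y ∈ Subgroup.zpowers sigma'GL, x * y = g := by
  constructor
  · intro hfix
    obtain ⟨i, hgi, hgv⟩ := exists_zpow_of_mem_G' hg
    have hsign : (-1 : ℝ) ^ i = 1 := by simpa using congrFun (hgv.symm.trans hfix) 2
    obtain ⟨m, rfl⟩ := Int.even_of_neg_one_zpow_eq_one hsign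
    have hsq : sigma2'GL ^ (m + m) = (sigma2'GL ^ 2) ^ m := by
      rw [← two_mul, _root_.zpow_mul, zpow_ofNat]
    rcases hgi with rfl | rfl
    · exact ⟨_, Subgroup.zpow_mem_zpowers _ m, 1, one_mem _, by rw [mul_one, hsq]⟩
    · exact ⟨_, Subgroup.zpow_mem_zpowers _ m, _, Subgroup.mem_zpowers _, by rw [hsq]⟩
  · rintro ⟨_, ⟨m, rfl⟩, _, ⟨k, rfl⟩, rfl⟩
    have hb := GeneralLinearGroup.zpow_mulVec_of_mulVec_eq_smul (g := sigma'GL)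
      (sigma'_mulVec_e₃.trans (one_smul ℝ _).symm) k
    have ha := GeneralLinearGroup.zpow_mulVec_of_mulVec_eq_smul (g := sigma2'GL)
      sigma2'_mulVec_e₃ (2 * m)
    rw [_root_.zpow_mul, zpow_ofNat] at ha
    rw [_root_.one_zpow, one_smul] at hb
    rw [Units.val_mul, ← mulVec_mulVec, hb, ha, Even.neg_one_zpow ⟨m, two_mul m⟩, one_smul]

theorem card_stabilizer_e₃ :
    Nat.card {g : G' | ((g : GL (Fin 3) ℝ) : Matrix (Fin 3) (Fin 3) ℝ) *ᵥ e₃ = e₃} = 8 := by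
  have hmem : ∀ p : Subgroup.zpowers (sigma2'GL ^ 2) × Subgroup.zpowers sigma'GL,
      (p.1 * p.2 : GL (Fin 3) ℝ) ∈ G' := fun p ↦ mul_mem
    (Subgroup.zpowers_le.2 (pow_mem sigma2'GL_mem_G' 2) p.1.2)
    (Subgroup.zpowers_le.2 sigma'GL_mem_G' p.2.2)
  let f : Subgroup.zpowers (sigma2'GL ^ 2) × Subgroup.zpowers sigma'GL →
      {g : G' | ((g : GL (Fin 3) ℝ) : Matrix (Fin 3) (Fin 3) ℝ) *ᵥ e₃ = e₃} := fun p ↦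
    ⟨⟨p.1 * p.2, hmem p⟩, (mulVec_e₃_eq_self_iff (hmem p)).2 ⟨_, p.1.2, _, p.2.2, rfl⟩⟩
  have hf : Function.Bijective f := by
    refine ⟨fun p q hpq ↦ Subgroup.mul_injective_of_disjoint
      disjoint_zpowers_sigma2'GL_sq_sigma'GL (congrArg (fun g ↦ (g.1 : GL (Fin 3) ℝ)) hpq),
      ?_⟩
    rintro ⟨⟨g, hg⟩, hfix⟩
    obtain ⟨x, hx, y, hy, rfl⟩ := (mulVec_e₃_eq_self_iff hg).1 hfix
    exact ⟨(⟨x, hx⟩, ⟨y, hy⟩), rfl⟩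
  rw [← Nat.card_eq_of_bijective f hf, Nat.card_prod, Nat.card_zpowers, Nat.card_zpowers,
    orderOf_sigma2'GL_sq, orderOf_sigma'GL]

/-- The orbit of `S_1 = (0,0,1)` under `G'` is exactly `{S_1, S_6}` with
`S_6 = (0,0,−1)`, and the stabilizer of `S_1` in `G'` has exactly `8` elements
(so `|G'| = 2 · 8 = 16` by the Orbit–Stabiliser Theorem). -/
theorem stmt_11 :
    {v : Fin 3 → ℝ | ∃ g ∈ G', (↑g : Matrix (Fin 3) (Fin 3) ℝ).mulVec ![0, 0, 1] = v}
      = {![0, 0, 1], ![0, 0, -1]} ∧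
    Nat.card {g : G' | (↑(↑g : GL (Fin 3) ℝ) : Matrix (Fin 3) (Fin 3) ℝ).mulVec
      ![0, 0, 1] = ![0, 0, 1]} = 8 :=
  ⟨orbit_e₃, card_stabilizer_e₃⟩
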